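/- For every d ≥ 1, all x, y in the simplex S_d, and every index i ∈ {1,…,d}, one has x_i − Leb( (S_{i−1}^x, S_i^x] ∩ (S_{i−1}^y, S_i^y] ) ≤ ‖x − y‖₁, where Leb denotes Lebesgue measure on ℝ and ‖x − y‖₁ = Σ_{j=1}^d |x_j − y_j|. -/

import Mathlib

/-!
The overlap of `(a, b]` and `(c, e]` has length at least `min b e - max a c`, so the part of
`x_i = b - a` it misses is at most `|a - c| + |b - e|`. With `a, c` the partial sums `S_{i-1}`,
`|a - c|` is at most the `ℓ¹` mass of `x - y` on the coordinates before `i`; since `x` and `y`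
both sum to `1`, `b - e` is minus the sum of `x - y` over the coordinates after `i`, so `|b - e|`
is at most the mass there. The two ranges of coordinates are disjoint.
-/

open MeasureTheory

/-- Partial sum `S_i^x = x_1 + ⋯ + x_i` of the first `i` coordinates of `x : ℝ^d`. -/
def partSum {d : ℕ} (x : Fin d → ℝ) (i : ℕ) : ℝ :=
  ∑ j ∈ Finset.univ.filter (fun j : Fin d => (j : ℕ) < i), x j

open Set Finset

theorem sub_toReal_volume_Ioc_inter_Ioc_le (a b c e : ℝ) :
    b - a - (volume (Ioc a b ∩ Ioc c e)).toReal ≤ |a - c| + |b - e| := by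
  rw [Set.Ioc_inter_Ioc, Real.volume_Ioc, ENNReal.toReal_ofReal']
  have hmin : b - min b e ≤ |b - e| := by
    rcases le_total b e with h | h <;> simp [h, le_abs_self]
  have hmax : max a c - a ≤ |a - c| := by
    rcases le_total a c with h | h <;> simp [h, abs_sub_comm a c, le_abs_self]
  linarith [le_max_left (min b e - max a c) 0]

section partSum

variable {d : ℕ}

theorem partSum_succ (x : Fin d → ℝ) (i : Fin d) :
    partSum x (i + 1) = partSum x i + x i := by
  unfold partSum
  rw [show univ.filter (fun j : Fin d => (j : ℕ) < i + 1)
      = insert i (univ.filter (fun j : Fin d => (j : ℕ) < i)) by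
    ext j; simp [le_iff_lt_or_eq, Fin.ext_iff, or_comm]]
  rw [sum_insert (by simp), add_comm]

theorem partSum_sub (x y : Fin d → ℝ) (k : ℕ) :
    partSum x k - partSum y k = partSum (x - y) k := by
  simp only [partSum, Pi.sub_apply, sum_sub_distrib]

theorem abs_partSum_le (z : Fin d → ℝ) (k : ℕ) :
    |partSum z k| ≤ ∑ j ∈ univ.filter (fun j : Fin d => (j : ℕ) < k), |z j| :=
  abs_sum_le_sum_abs _ _

theorem abs_partSum_le_of_sum_eq_zero (z : Fin d → ℝ) (k : ℕ) (hz : ∑ j, z j = 0) :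
    |partSum z k| ≤ ∑ j ∈ univ.filter (fun j : Fin d => ¬ (j : ℕ) < k), |z j| := by
  have htail : partSum z k = -∑ j ∈ univ.filter (fun j : Fin d => ¬ (j : ℕ) < k), z j := by
    rw [eq_neg_iff_add_eq_zero, partSum, sum_filter_add_sum_filter_not, hz]
  rw [htail, abs_neg]
  exact abs_sum_le_sum_abs _ _

end partSum

theorem coord_sub_overlap_le_l1_general
    (d : ℕ) (x y : Fin d → ℝ)
    (hx : x ∈ stdSimplex ℝ (Fin d)) (hy : y ∈ stdSimplex ℝ (Fin d)) (i : Fin d) :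
    x i - (MeasureTheory.volume
        (Set.Ioc (partSum x (i : ℕ)) (partSum x ((i : ℕ) + 1))
          ∩ Set.Ioc (partSum y (i : ℕ)) (partSum y ((i : ℕ) + 1)))).toReal
      ≤ ∑ j, |x j - y j| := by
  have hsum : ∑ j, (x - y) j = 0 := by simp [sum_sub_distrib, hx.2, hy.2]
  calc _ = partSum x (i + 1) - partSum x i - (volume
        (Ioc (partSum x i) (partSum x (i + 1)) ∩ Ioc (partSum y i) (partSum y (i + 1)))).toReal :=
        by rw [partSum_succ]; ring
    _ ≤ |partSum x i - partSum y i| + |partSum x (i + 1) - partSum y (i + 1)| :=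
        sub_toReal_volume_Ioc_inter_Ioc_le ..
    _ ≤ ∑ j ∈ univ.filter (fun j : Fin d => (j : ℕ) < i), |(x - y) j|
          + ∑ j ∈ univ.filter (fun j : Fin d => ¬ (j : ℕ) < i + 1), |(x - y) j| := by
        rw [partSum_sub, partSum_sub]
        exact add_le_add (abs_partSum_le _ _) (abs_partSum_le_of_sum_eq_zero _ _ hsum)
    _ ≤ ∑ j ∈ univ.filter (fun j : Fin d => (j : ℕ) < i), |(x - y) j|
          + ∑ j ∈ univ.filter (fun j : Fin d => ¬ (j : ℕ) < i), |(x - y) j| := by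
        refine add_le_add_right
          (sum_le_sum_of_subset_of_nonneg ?_ fun j _ _ => abs_nonneg ((x - y) j)) _
        intro j hj; simp only [mem_filter, Finset.mem_univ, true_and] at hj ⊢; omega
    _ = ∑ j, |x j - y j| := sum_filter_add_sum_filter_not _ _ _

/-- For `x, y` in the simplex `S_d` and each coordinate `i`,
`x_i − Leb((S_{i−1}^x, S_i^x] ∩ (S_{i−1}^y, S_i^y]) ≤ ‖x − y‖₁`. -/
theorem coord_sub_overlap_le_l1
    (d : ℕ) (hd : 1 ≤ d) (x y : Fin d → ℝ)
    (hx : x ∈ stdSimplex ℝ (Fin d)) (hy : y ∈ stdSimplex ℝ (Fin d)) (i : Fin d) :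
    x i - (MeasureTheory.volume
        (Set.Ioc (partSum x (i : ℕ)) (partSum x ((i : ℕ) + 1))
          ∩ Set.Ioc (partSum y (i : ℕ)) (partSum y ((i : ℕ) + 1)))).toReal
      ≤ ∑ j, |x j - y j| :=
  coord_sub_overlap_le_l1_general d x y hx hy i
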